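/- The syntactic universality predicate is sound: for every contract C, if unv(C) = true then L(C) = A*, the set of all paths over the property alphabet A. -/

import Mathlib

/-- Contracts over a property alphabet `A`: extended regular expressions with
intersection, with a distinguished universe literal `?` denoting all of `A`
and regular-expression literals modeled as sets of properties. -/
inductive Contract (A : Type*) where
  | emptyset : Contract A
  | eps : Contract A
  | univLit : Contract A
  | lit : Set A → Contract A
  | star : Contract A → Contract A
  | union : Contract A → Contract A → Contract A
  | inter : Contract A → Contract A → Contract A
  | concat : Contract A → Contract A → Contract A

namespace Contract

variable {A : Type*}

/-- The language of a contract. -/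
def lang : Contract A → Set (List A)
  | emptyset => ∅
  | eps => {[]}
  | univLit => {w | ∃ p, w = [p]}
  | lit s => {w | ∃ p ∈ s, w = [p]}
  | star c => {w | ∃ ws : List (List A), (∀ x ∈ ws, x ∈ lang c) ∧ w = ws.flatten}
  | union c c' => lang c ∪ lang c'
  | inter c c' => lang c ∩ lang c'
  | concat c c' => {w | ∃ u ∈ lang c, ∃ v ∈ lang c', w = u ++ v}

/-- The syntactic indifference predicate `ind`: sound for `L(C) = A`. -/
def ind : Contract A → Prop
  | emptyset => False
  | eps => False
  | univLit => True
  | lit _ => False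
  | star c => ind c
  | union c c' => ind c ∨ ind c'
  | inter c c' => ind c ∧ ind c'
  | concat c c' => (c = eps ∧ ind c') ∨ (ind c ∧ c' = eps)

/-- The syntactic universality predicate `unv`. -/
def unv : Contract A → Prop
  | emptyset => False
  | eps => False
  | univLit => False
  | lit _ => False
  | star c => unv c ∨ ind c
  | union c c' => unv c ∨ unv c'
  | inter c c' => unv c ∧ unv c'
  | concat c c' => (c = eps ∧ unv c') ∨ (unv c ∧ c' = eps) ∨ (unv c ∧ unv c')

end Contract

namespace Contract

variable {A : Type*}

theorem singleton_mem_lang_of_ind {C : Contract A} (h : C.ind) (p : A) : [p] ∈ C.lang := by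
  induction C with
  | univLit => exact ⟨p, rfl⟩
  | star c ih => exact ⟨[[p]], by simpa using ih h, by simp⟩
  | union c c' ih ih' => exact h.imp ih ih'
  | inter c c' ih ih' => exact ⟨ih h.1, ih' h.2⟩
  | concat c c' ih ih' =>
    rcases h with ⟨rfl, h'⟩ | ⟨h, rfl⟩
    · exact ⟨[], rfl, [p], ih' h', rfl⟩
    · exact ⟨[p], ih h, [], rfl, rfl⟩
  | emptyset | eps | lit _ => exact h.elim

theorem lang_star_eq_univ {c : Contract A} (h : ∀ p : A, [p] ∈ c.lang) :
    (star c).lang = Set.univ :=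
  Set.eq_univ_of_forall fun w =>
    ⟨w.map fun p => [p], by simpa using fun p _ => h p,
      by rw [← List.flatMap_def, List.flatMap_singleton']⟩

theorem lang_concat_eq_univ_of_left {c c' : Contract A} (h : c.lang = Set.univ)
    (h' : [] ∈ c'.lang) : (concat c c').lang = Set.univ :=
  Set.eq_univ_of_forall fun w => ⟨w, h ▸ Set.mem_univ _, [], h', (List.append_nil w).symm⟩

theorem lang_concat_eq_univ_of_right {c c' : Contract A} (h : [] ∈ c.lang)
    (h' : c'.lang = Set.univ) : (concat c c').lang = Set.univ :=
  Set.eq_univ_of_forall fun w => ⟨[], h, w, h' ▸ Set.mem_univ _, rfl⟩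

end Contract

/-- Soundness of the syntactic universality predicate: if `unv(C)` holds, then
the language of `C` is the set of all paths over the property alphabet `A`. -/
theorem unv_sound {A : Type*} (C : Contract A) (h : Contract.unv C) :
    Contract.lang C = (Set.univ : Set (List A)) := by
  induction C with
  | star c ih =>
    refine Contract.lang_star_eq_univ fun p => ?_
    rcases h with h | h
    · exact (ih h).symm ▸ Set.mem_univ _
    · exact Contract.singleton_mem_lang_of_ind h p
  | union c c' ih ih' =>
    rcases h with h | h
    · simp [Contract.lang, ih h]
    · simp [Contract.lang, ih' h]
  | inter c c' ih ih' => simp [Contract.lang, ih h.1, ih' h.2]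
  | concat c c' ih ih' =>
    rcases h with ⟨rfl, h'⟩ | ⟨h, rfl⟩ | ⟨h, h'⟩
    · exact Contract.lang_concat_eq_univ_of_right rfl (ih' h')
    · exact Contract.lang_concat_eq_univ_of_left (ih h) rfl
    · exact Contract.lang_concat_eq_univ_of_left (ih h) ((ih' h').symm ▸ Set.mem_univ _)
  | emptyset | eps | univLit | lit _ => exact h.elim
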